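/- arXiv:0905.2040 — 3 statements merged into one kernel-verified Lean document; each statement's English description precedes it below -/
import Mathlib

section
/- A loop (Q,·,\,/) is a right universal Osborn loop (i.e., every right principal isotope x∗y = x·(u\y) is an Osborn loop) if and only if it obeys the identity (ux)·u\{(yz)·x} = ((ux)·u\{[y(u\(u/x))]·x})·u\[(uz)·x] for all x,y,z,u ∈ Q. -/
/-- A loop: a set with multiplication, left division `ld`, right division `rd`
and a two-sided identity `e`. -/
structure LoopStr (Q : Type*) where
  mul : Q → Q → Q
  ld : Q → Q → Q
  rd : Q → Q → Q
  e : Q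
  mul_ld : ∀ x y, mul x (ld x y) = y
  rd_mul : ∀ x y, mul (rd y x) x = y
  ld_mul : ∀ x y, ld x (mul x y) = y
  mul_rd : ∀ x y, rd (mul y x) x = y
  one_mul : ∀ x, mul e x = x
  mul_one : ∀ x, mul x e = x

namespace LoopStr

variable {Q : Type*} (L : LoopStr Q)

/-- The left inverse `x^λ` of `x`, i.e. the unique element with `x^λ · x = e`. -/
def lam (x : Q) : Q := L.rd L.e x

/-- The right inverse `x^ρ` of `x`, i.e. the unique element with `x · x^ρ = e`. -/
def rho (x : Q) : Q := L.ld x L.e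

/-- A binary operation `op` with identity `e'` is Osborn if, whenever `xl` is a
left inverse of `x` w.r.t. `op`, the Osborn identity
`x(yz·x) = (x(y·x^λ·x))·(zx)` holds. -/
def IsOsbornOp (op : Q → Q → Q) (e' : Q) : Prop :=
  ∀ x y z xl, op xl x = e' →
    op x (op (op y z) x) = op (op x (op (op y xl) x)) (op z x)

/-- The `u,v`-principal isotope: `x ∗ y = (x/v)·(u\y)`; its identity is `u·v`. -/
def isotope (u v : Q) : Q → Q → Q := fun x y => L.mul (L.rd x v) (L.ld u y)

/-- `Q` is a universal Osborn loop: every `u,v`-principal isotope is Osborn. -/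
def Universal : Prop := ∀ u v, IsOsbornOp (L.isotope u v) (L.mul u v)

/-- `Q` is a left universal Osborn loop: every left principal isotope
`x ∗ y = (x/v)·y` (identity `v`) is Osborn. -/
def LeftUniversal : Prop := ∀ v, IsOsbornOp (fun x y => L.mul (L.rd x v) y) v

/-- `Q` is a right universal Osborn loop: every right principal isotope
`x ∗ y = x·(u\y)` (identity `u`) is Osborn. -/
def RightUniversal : Prop := ∀ u, IsOsbornOp (fun x y => L.mul x (L.ld u y)) u

end LoopStr

open LoopStr

namespace LoopStr

variable {Q : Type*} (L : LoopStr Q)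

theorem isOsbornOp_iff_of_leftInv {op : Q → Q → Q} {e' : Q} (inv : Q → Q)
    (h_inv : ∀ x xl, op xl x = e' ↔ xl = inv x) :
    IsOsbornOp op e' ↔
      ∀ x y z, op x (op (op y z) x) = op (op x (op (op y (inv x)) x)) (op z x) := by
  simp only [IsOsbornOp, h_inv, forall_eq]

theorem mul_eq_iff_eq_rd {a b c : Q} : L.mul a b = c ↔ a = L.rd c b :=
  ⟨fun h => by rw [← h, mul_rd], fun h => by rw [h, rd_mul]⟩

theorem forall_mul_left_iff (u : Q) {p : Q → Prop} : (∀ x, p (L.mul u x)) ↔ ∀ x, p x :=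
  ⟨fun h x => L.mul_ld u x ▸ h (L.ld u x), fun h _ => h _⟩

/- In the isotope `x ∗ y = x·(u\y)` the left inverse of `x` is `u/(u\x)`; substituting `u·x`, `u·z`
for `x`, `z` turns the Osborn identity into the stated one. -/
theorem isOsbornOp_rightIsotope_iff (u : Q) :
    IsOsbornOp (fun x y => L.mul x (L.ld u y)) u ↔ ∀ x y z,
      L.mul (L.mul u x) (L.ld u (L.mul (L.mul y z) x)) =
      L.mul
        (L.mul (L.mul u x)
          (L.ld u (L.mul (L.mul y (L.ld u (L.rd u x))) x)))
        (L.ld u (L.mul (L.mul u z) x)) := by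
  rw [isOsbornOp_iff_of_leftInv (fun x => L.rd u (L.ld u x)) fun _ _ => L.mul_eq_iff_eq_rd,
    ← L.forall_mul_left_iff u]
  refine forall_congr' fun x => forall_congr' fun y => ?_
  rw [← L.forall_mul_left_iff u]
  simp only [ld_mul]

end LoopStr

theorem right_universal_osborn_iff {Q : Type*} (L : LoopStr Q) :
    L.RightUniversal ↔ ∀ x y z u,
      L.mul (L.mul u x) (L.ld u (L.mul (L.mul y z) x)) =
      L.mul
        (L.mul (L.mul u x)
          (L.ld u (L.mul (L.mul y (L.ld u (L.rd u x))) x)))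
        (L.ld u (L.mul (L.mul u z) x)) := by
  simp only [RightUniversal, isOsbornOp_rightIsotope_iff]
  exact ⟨fun h x y z u => h u x y z, fun h u x y z => h x y z u⟩
end

section
/- A universal Osborn loop is a 3-power-associative property loop (xx·x = x·xx for all x) if and only if it satisfies both xx·xx = (x·xx)·x and xx·xx = (xx·x)·x for all x. -/
namespace LoopStr

variable {Q : Type*} (L : LoopStr Q)

theorem mul_left_cancel {x a b : Q} (hab : L.mul x a = L.mul x b) : a = b := by
  rw [← L.ld_mul x a, hab, L.ld_mul]

theorem mul_right_cancel {x a b : Q} (hab : L.mul a x = L.mul b x) : a = b := by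
  rw [← L.mul_rd x a, hab, L.mul_rd]

theorem ld_self (x : Q) : L.ld x x = L.e := by
  simpa only [L.mul_one] using L.ld_mul x L.e

theorem rd_self (x : Q) : L.rd x x = L.e := by
  simpa only [L.one_mul] using L.mul_rd x L.e

theorem ld_one_left (x : Q) : L.ld L.e x = x := by
  simpa only [L.one_mul] using L.ld_mul L.e x

theorem rd_one_right (x : Q) : L.rd x L.e = x := by
  simpa only [L.mul_one] using L.mul_rd L.e x

theorem mul_rho (x : Q) : L.mul x (L.rho x) = L.e := L.mul_ld x L.e

variable {L}

theorem Universal.rightUniversal (h : L.Universal) : L.RightUniversal := by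
  intro u
  have hop : L.isotope u L.e = fun a b => L.mul a (L.ld u b) := by
    funext a b
    rw [isotope, rd_one_right]
  simpa only [hop, L.mul_one] using h u L.e

theorem RightUniversal.isOsbornOp_mul (h : L.RightUniversal) : IsOsbornOp L.mul L.e := by
  simpa only [ld_one_left] using h L.e

theorem Universal.mul_mul_mul_rho_mul_mul (h : L.Universal) (x : Q) :
    L.mul x (L.mul (L.mul x (L.mul (L.rho x) x)) x) = L.mul (L.mul x x) x := by
  have hxl : L.isotope x x (L.mul (L.mul x x) x) x = L.mul x x := by
    simp only [isotope, ld_self, mul_rd, mul_one]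
  have hO := h x x x x (L.mul x x) _ hxl
  simp only [isotope, rd_self, ld_self, one_mul, mul_one, ld_mul, mul_rd] at hO
  rw [rho, hO, rd_mul, mul_ld, rd_mul, mul_ld]

theorem RightUniversal.mul_mul_sq_ld_rho_mul (h : L.RightUniversal) (x : Q) :
    L.mul (L.mul (L.mul x x) (L.ld x (L.mul (L.rho x) x))) x = L.mul x x := by
  have hO := h x (L.mul x x) L.e x L.e (by simp only [ld_mul, one_mul])
  simp only [ld_self, ld_mul, one_mul, mul_one] at hO
  rw [rho]
  exact hO.symm

theorem Universal.rho_mul_self_of_cube_comm (h : L.Universal) {x : Q}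
    (hx : L.mul (L.mul x x) x = L.mul x (L.mul x x)) : L.mul (L.rho x) x = L.e := by
  have hsq := L.mul_left_cancel (h.mul_mul_mul_rho_mul_mul x |>.trans hx)
  apply L.mul_left_cancel (x := x)
  rw [L.mul_one]
  exact L.mul_right_cancel hsq

theorem RightUniversal.mul_sq_rho_of_rho_mul_self (h : L.RightUniversal) {x : Q}
    (hρ : L.mul (L.rho x) x = L.e) : L.mul (L.mul x x) (L.rho x) = x := by
  have hB := h.mul_mul_sq_ld_rho_mul x
  rw [hρ, ← rho] at hB
  exact L.mul_right_cancel hB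

theorem sq_mul_sq_of_isOsbornOp (hO : IsOsbornOp L.mul L.e) {x : Q}
    (hρ : L.mul (L.rho x) x = L.e) (hsq : L.mul (L.mul x x) (L.rho x) = x) :
    L.mul (L.mul x x) (L.mul x x) = L.mul (L.mul x (L.mul x x)) x := by
  have hsq_sq := hO x x x (L.rho x) hρ
  have hcube := hO x (L.mul x x) L.e (L.rho x) hρ
  rw [mul_rho, L.one_mul] at hsq_sq
  rw [hsq, L.mul_one, L.one_mul] at hcube
  rw [← hsq_sq, hcube]

end LoopStr

open LoopStr

theorem universal_osborn_three_pa_iff {Q : Type*} (L : LoopStr Q)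
    (h : L.Universal) :
    (∀ x, L.mul (L.mul x x) x = L.mul x (L.mul x x)) ↔
      ((∀ x, L.mul (L.mul x x) (L.mul x x) = L.mul (L.mul x (L.mul x x)) x) ∧
        (∀ x, L.mul (L.mul x x) (L.mul x x) = L.mul (L.mul (L.mul x x) x) x)) := by
  constructor
  · intro h3
    have hA : ∀ x, L.mul (L.mul x x) (L.mul x x) = L.mul (L.mul x (L.mul x x)) x := by
      intro x
      have hρ := h.rho_mul_self_of_cube_comm (h3 x)
      have hR := h.rightUniversal
      exact sq_mul_sq_of_isOsbornOp hR.isOsbornOp_mul hρ (hR.mul_sq_rho_of_rho_mul_self hρ)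
    exact ⟨hA, fun x => h3 x ▸ hA x⟩
  · rintro ⟨hA, hB⟩ x
    exact (L.mul_right_cancel ((hA x).symm.trans (hB x))).symm
end

section
/- A left universal Osborn loop is a left self inverse property loop (x^λ·(xx) = x for all x) if and only if it is a 3-power-associative property loop (xx·x = x·xx for all x). -/
open LoopStr

namespace LoopStr

variable {Q : Type*} {L : LoopStr Q}

theorem rd_eq_iff {a x b : Q} : L.rd a x = b ↔ a = L.mul b x := by
  constructor
  · rintro rfl
    exact (L.rd_mul x a).symm
  · rintro rfl
    exact L.mul_rd x b

theorem ld_eq_iff {x a b : Q} : L.ld x a = b ↔ a = L.mul x b := by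
  constructor
  · rintro rfl
    exact (L.mul_ld x a).symm
  · rintro rfl
    exact L.ld_mul x b

theorem rd_ld_eq_iff {x a y b : Q} : L.rd (L.ld x a) y = b ↔ a = L.mul x (L.mul b y) := by
  rw [rd_eq_iff, ld_eq_iff]

theorem lam_mul (x : Q) : L.mul (L.lam x) x = L.e :=
  L.rd_mul x L.e

theorem LeftUniversal.lam_mul_rd_eq_mul (h : L.LeftUniversal) (x w : Q) :
    L.mul (L.lam x) (L.rd (L.mul x (L.mul w x)) x) =
      L.mul (L.rd (L.mul (L.lam x) (L.rd (L.mul x (L.mul x x)) x)) x) w := by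
  have hinv : L.mul (L.rd (L.mul x x) x) L.e = x := by rw [L.mul_rd, L.mul_one]
  simpa only [L.mul_rd, L.mul_one, lam] using h x L.e (L.mul x x) (L.mul w x) (L.mul x x) hinv

theorem LeftUniversal.lam_mul_rd (h : L.LeftUniversal) (x w : Q) :
    L.mul (L.lam x) (L.rd (L.mul x (L.mul w x)) x) = w := by
  have hc : L.rd (L.mul (L.lam x) (L.rd (L.mul x (L.mul x x)) x)) x = L.e := by
    have he := h.lam_mul_rd_eq_mul x L.e
    rwa [L.one_mul, L.mul_rd, lam_mul, L.mul_one, eq_comm] at he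
  rw [h.lam_mul_rd_eq_mul, hc, L.one_mul]

theorem LeftUniversal.lam_mul_mul_self (h : L.LeftUniversal) (x : Q) :
    L.mul (L.lam x) (L.mul x x) = L.rd (L.ld x (L.mul (L.mul x x) x)) x := by
  simpa only [L.rd_mul, L.mul_ld, L.mul_rd] using
    h.lam_mul_rd x (L.rd (L.ld x (L.mul (L.mul x x) x)) x)

end LoopStr

theorem left_universal_osborn_lsip_iff_3pa {Q : Type*} (L : LoopStr Q)
    (h : L.LeftUniversal) :
    (∀ x, L.mul (L.lam x) (L.mul x x) = x) ↔
      (∀ x, L.mul (L.mul x x) x = L.mul x (L.mul x x)) := by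
  simp only [h.lam_mul_mul_self, rd_ld_eq_iff]
end
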